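/- arXiv:1002.0992 — 2 statements merged into one kernel-verified Lean document; each statement's English description precedes it below -/
import Mathlib

section
/- The function ρ(σ) = σ - tanh(√c₁ σ + c₂)/√c₁ (for constants c₁ > 0, c₂) satisfies the third-order ODE ρ''' = (3/(2ρ'))·(ρ'')² - ((ρ'-1)/(ρ-σ))·ρ'' + 2(ρ'-1)ρ'(ρ'+1)/(ρ-σ)², wherever ρ' ≠ 0 and ρ ≠ σ. -/
/-!
The function `u = ρ - σ = -tanh (√c₁ σ + c₂) / √c₁` solves the Riccati equation
`u' = c₁ u² - 1`, i.e. `ρ' = c₁ (ρ - σ)²`. Differentiating this twice expresses `ρ'`, `ρ''` and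
`ρ'''` as polynomials in `u`, and the governing ODE becomes a rational identity in `u`, valid
wherever `u ≠ 0`.
-/

open Real

theorem Real.hasDerivAt_tanh (x : ℝ) : HasDerivAt tanh (1 - tanh x ^ 2) x := by
  have h := (hasDerivAt_sinh x).div (hasDerivAt_cosh x) (cosh_pos x).ne'
  rw [show sinh / cosh = tanh from funext fun y => (tanh_eq_sinh_div_cosh y).symm] at h
  refine h.congr_deriv ?_
  rw [tanh_eq_sinh_div_cosh]
  field_simp

theorem HasDerivAt.tanh {f : ℝ → ℝ} {f' x : ℝ} (hf : HasDerivAt f f' x) :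
    HasDerivAt (fun y => Real.tanh (f y)) ((1 - Real.tanh (f x) ^ 2) * f') x :=
  (Real.hasDerivAt_tanh (f x)).comp x hf

theorem hasDerivAt_sub_tanh_div {s : ℝ} (hs : s ≠ 0) (c x : ℝ) :
    HasDerivAt (fun y => y - tanh (s * y + c) / s) (tanh (s * x + c) ^ 2) x := by
  have ht := (((hasDerivAt_id' x).const_mul s).add_const c).tanh
  refine ((hasDerivAt_id' x).fun_sub (ht.div_const s)).congr_deriv ?_
  field_simp
  ring

def SatisfiesGoverningODE (ρ : ℝ → ℝ) (σ : ℝ) : Prop :=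
  deriv (deriv (deriv ρ)) σ =
    3 / (2 * deriv ρ σ) * (deriv (deriv ρ) σ) ^ 2
    - (deriv ρ σ - 1) / (ρ σ - σ) * deriv (deriv ρ) σ
    + 2 * ((deriv ρ σ - 1) * deriv ρ σ * (deriv ρ σ + 1)) / (ρ σ - σ) ^ 2

theorem satisfiesGoverningODE_of_hasDerivAt_sq {ρ : ℝ → ℝ} {k : ℝ} (hk : k ≠ 0)
    (hρ : ∀ x, HasDerivAt ρ (k * (ρ x - x) ^ 2) x) {σ : ℝ} (hσ : ρ σ ≠ σ) :
    SatisfiesGoverningODE ρ σ := by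
  unfold SatisfiesGoverningODE
  set u := fun x => ρ x - x
  have hu : ∀ x, HasDerivAt u (k * u x ^ 2 - 1) x := fun x => by
    simpa using (hρ x).fun_sub (hasDerivAt_id' x)
  have hρ' : deriv ρ = fun x => k * u x ^ 2 := funext fun x => (hρ x).deriv
  have hasDerivAt_ρ' :
      ∀ x, HasDerivAt (fun x => k * u x ^ 2) (2 * k * u x * (k * u x ^ 2 - 1)) x :=
    fun x => (((hu x).fun_pow 2).const_mul k).congr_deriv (by ring)
  have hρ'' : deriv (deriv ρ) = fun x => 2 * k * u x * (k * u x ^ 2 - 1) := by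
    rw [hρ']; exact funext fun x => (hasDerivAt_ρ' x).deriv
  have hasDerivAt_ρ'' : HasDerivAt (fun x => 2 * k * u x * (k * u x ^ 2 - 1))
      (2 * k * (k * u σ ^ 2 - 1) * (3 * k * u σ ^ 2 - 1)) σ := by
    simpa only [mul_assoc] using
      (((hu σ).const_mul (2 * k)).fun_mul ((hasDerivAt_ρ' σ).sub_const 1)).congr_deriv
        (by ring)
  have huσ : u σ ≠ 0 := sub_ne_zero.mpr hσ
  rw [hρ'', hasDerivAt_ρ''.deriv, hρ']
  field_simp
  ring

theorem tanh_solution_satisfies_governing_ODE_general (c₁ c₂ : ℝ) (hc₁ : 0 < c₁)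
    (ρ : ℝ → ℝ)
    (hρ : ρ = fun σ => σ - Real.tanh (Real.sqrt c₁ * σ + c₂) / Real.sqrt c₁)
    (σ : ℝ) (h1 : Real.tanh (Real.sqrt c₁ * σ + c₂) ≠ 0) :
    deriv (deriv (deriv ρ)) σ =
      3 / (2 * deriv ρ σ) * (deriv (deriv ρ) σ) ^ 2
      - (deriv ρ σ - 1) / (ρ σ - σ) * deriv (deriv ρ) σ
      + 2 * ((deriv ρ σ - 1) * deriv ρ σ * (deriv ρ σ + 1)) / (ρ σ - σ) ^ 2 := by
  have hs : sqrt c₁ ≠ 0 := (sqrt_pos.mpr hc₁).ne'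
  have hρ_sub : ∀ x, ρ x - x = -tanh (sqrt c₁ * x + c₂) / sqrt c₁ := fun x => by
    rw [hρ]; ring
  have hriccati : ∀ x, HasDerivAt ρ (c₁ * (ρ x - x) ^ 2) x := fun x => by
    rw [hρ_sub, hρ]
    refine (hasDerivAt_sub_tanh_div hs c₂ x).congr_deriv ?_
    rw [div_pow, neg_sq, sq_sqrt hc₁.le]
    field_simp
  have hσ : ρ σ ≠ σ := by
    rw [ne_eq, ← sub_eq_zero, hρ_sub]
    exact div_ne_zero (neg_ne_zero.mpr h1) hs
  exact satisfiesGoverningODE_of_hasDerivAt_sq hc₁.ne' hriccati hσ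

/-- ρ(σ) = σ - tanh(√c₁ σ + c₂)/√c₁ satisfies the governing third-order ODE. -/
theorem tanh_solution_satisfies_governing_ODE (c₁ c₂ : ℝ) (hc₁ : 0 < c₁)
    (ρ : ℝ → ℝ)
    (hρ : ρ = fun σ => σ - Real.tanh (Real.sqrt c₁ * σ + c₂) / Real.sqrt c₁)
    (σ : ℝ) (h1 : Real.tanh (Real.sqrt c₁ * σ + c₂) ≠ 0)
    (h2 : deriv ρ σ ≠ 0) :
    deriv (deriv (deriv ρ)) σ =
      3 / (2 * deriv ρ σ) * (deriv (deriv ρ) σ) ^ 2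
      - (deriv ρ σ - 1) / (ρ σ - σ) * deriv (deriv ρ) σ
      + 2 * ((deriv ρ σ - 1) * deriv ρ σ * (deriv ρ σ + 1)) / (ρ σ - σ) ^ 2 :=
  tanh_solution_satisfies_governing_ODE_general c₁ c₂ hc₁ ρ hρ σ h1
end

section
/- Suppose ρ(σ) satisfies ρ'' ≠ 0 and the product γ⁽¹⁾γ⁽²⁾ := (ρ'−1)²/(ερ') − (ρ−σ)²(ρ'')²/(4ε(ρ')³) is constant on an interval (ε = ±1 a fixed sign). Then ρ satisfies the governing equation ρ''' = (3/(2ρ'))(ρ'')² − ((ρ'−1)/(ρ−σ))ρ'' + 2(ρ'−1)ρ'(ρ'+1)/(ρ−σ)². Conversely, if ρ satisfies the governing equation then this product is constant. -/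
/-!
Differentiating the product `γ⁽¹⁾γ⁽²⁾` gives `-(ρ - σ)² ρ'' / (2ε ρ'³)` times the defect
`ρ''' - R` of the governing equation `ρ''' = R`. The prefactor vanishes nowhere when
`ρ' ≠ 0`, `ρ ≠ σ` and `ρ'' ≠ 0`, so on an interval the product is constant exactly when the
defect vanishes identically.
-/

open Set

theorem exists_eq_const_iff_hasDerivAt_eq_zero {𝕜 G : Type*} [RCLike 𝕜] [NormedAddCommGroup G]
    [NormedSpace 𝕜 G] {f f' : 𝕜 → G} {s : Set 𝕜} (hs : IsOpen s) (hs' : IsPreconnected s)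
    (hf : ∀ x ∈ s, HasDerivAt f (f' x) x) :
    (∃ K, ∀ x ∈ s, f x = K) ↔ ∀ x ∈ s, f' x = 0 := by
  constructor
  · rintro ⟨K, hK⟩ x hx
    have hfK : f =ᶠ[nhds x] fun _ => K := Filter.eventuallyEq_of_mem (hs.mem_nhds hx) hK
    exact (hf x hx).unique ((hasDerivAt_const x K).congr_of_eventuallyEq hfK)
  · intro hf'
    refine hs.exists_is_const_of_deriv_eq_zero hs'
      (fun x hx => (hf x hx).differentiableAt.differentiableWithinAt) fun x hx => ?_
    rw [(hf x hx).deriv, hf' x hx, Pi.zero_apply]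

noncomputable def gammaProduct (ε : ℝ) (ρ : ℝ → ℝ) (σ : ℝ) : ℝ :=
  (deriv ρ σ - 1) ^ 2 / (ε * deriv ρ σ)
    - (ρ σ - σ) ^ 2 * (deriv (deriv ρ) σ) ^ 2 / (4 * ε * (deriv ρ σ) ^ 3)

noncomputable def governingRHS (ρ : ℝ → ℝ) (σ : ℝ) : ℝ :=
  3 / (2 * deriv ρ σ) * (deriv (deriv ρ) σ) ^ 2
    - (deriv ρ σ - 1) / (ρ σ - σ) * deriv (deriv ρ) σ
    + 2 * ((deriv ρ σ - 1) * deriv ρ σ * (deriv ρ σ + 1)) / (ρ σ - σ) ^ 2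

theorem hasDerivAt_gammaProduct {ε : ℝ} {ρ : ℝ → ℝ} {σ : ℝ} (hε : ε ≠ 0)
    (hρ' : deriv ρ σ ≠ 0) (hρσ : ρ σ - σ ≠ 0) (hd₀ : DifferentiableAt ℝ ρ σ)
    (hd₁ : DifferentiableAt ℝ (deriv ρ) σ) (hd₂ : DifferentiableAt ℝ (deriv (deriv ρ)) σ) :
    HasDerivAt (gammaProduct ε ρ)
      (-((ρ σ - σ) ^ 2 * deriv (deriv ρ) σ / (2 * ε * (deriv ρ σ) ^ 3)) *
        (deriv (deriv (deriv ρ)) σ - governingRHS ρ σ)) σ := by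
  have hA := ((hd₁.hasDerivAt.sub_const 1).pow 2).div (hd₁.hasDerivAt.const_mul ε)
    (mul_ne_zero hε hρ')
  have hB := (((hd₀.hasDerivAt.sub (hasDerivAt_id σ)).pow 2).mul (hd₂.hasDerivAt.pow 2)).div
    (hd₁.hasDerivAt.pow 3 |>.const_mul (4 * ε)) (by simp [hε, hρ'])
  refine (hA.sub hB).congr_deriv ?_
  simp only [governingRHS, Pi.pow_apply, Pi.mul_apply, Pi.sub_apply, id]
  field_simp
  ring

/-- Equivalence: γ⁽¹⁾γ⁽²⁾ constant ↔ the governing third-order ODE, when ρ'' ≠ 0. -/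
theorem product_constant_iff_governing_ODE (a b ε : ℝ) (hε : ε = 1 ∨ ε = -1)
    (ρ : ℝ → ℝ) (hρ : ContDiffOn ℝ 3 ρ (Set.Ioo a b))
    (h1 : ∀ σ ∈ Set.Ioo a b, deriv ρ σ ≠ 0)
    (h2 : ∀ σ ∈ Set.Ioo a b, ρ σ - σ ≠ 0)
    (h3 : ∀ σ ∈ Set.Ioo a b, deriv (deriv ρ) σ ≠ 0) :
    (∃ K : ℝ, ∀ σ ∈ Set.Ioo a b,
        (deriv ρ σ - 1) ^ 2 / (ε * deriv ρ σ)
          - (ρ σ - σ) ^ 2 * (deriv (deriv ρ) σ) ^ 2 / (4 * ε * (deriv ρ σ) ^ 3)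
          = K) ↔
    (∀ σ ∈ Set.Ioo a b,
      deriv (deriv (deriv ρ)) σ =
        3 / (2 * deriv ρ σ) * (deriv (deriv ρ) σ) ^ 2
        - (deriv ρ σ - 1) / (ρ σ - σ) * deriv (deriv ρ) σ
        + 2 * ((deriv ρ σ - 1) * deriv ρ σ * (deriv ρ σ + 1)) / (ρ σ - σ) ^ 2) := by
  change (∃ K, ∀ σ ∈ Ioo a b, gammaProduct ε ρ σ = K) ↔
    ∀ σ ∈ Ioo a b, deriv (deriv (deriv ρ)) σ = governingRHS ρ σ
  have hε0 : ε ≠ 0 := by rcases hε with rfl | rfl <;> norm_num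
  have hρ₁ : ContDiffOn ℝ 2 (deriv ρ) (Ioo a b) := hρ.deriv_of_isOpen isOpen_Ioo (by norm_num)
  have hρ₂ : ContDiffOn ℝ 1 (deriv (deriv ρ)) (Ioo a b) :=
    hρ₁.deriv_of_isOpen isOpen_Ioo (by norm_num)
  have hdiff {n : WithTop ℕ∞} {f : ℝ → ℝ} (hf : ContDiffOn ℝ n f (Ioo a b)) (hn : n ≠ 0)
      {σ : ℝ} (hσ : σ ∈ Ioo a b) : DifferentiableAt ℝ f σ :=
    (hf.contDiffAt (isOpen_Ioo.mem_nhds hσ)).differentiableAt hn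
  rw [exists_eq_const_iff_hasDerivAt_eq_zero isOpen_Ioo isPreconnected_Ioo fun σ hσ =>
    hasDerivAt_gammaProduct hε0 (h1 σ hσ) (h2 σ hσ) (hdiff hρ (by norm_num) hσ)
      (hdiff hρ₁ (by norm_num) hσ) (hdiff hρ₂ (by norm_num) hσ)]
  refine forall₂_congr fun σ hσ => ?_
  have hfactor : -((ρ σ - σ) ^ 2 * deriv (deriv ρ) σ / (2 * ε * (deriv ρ σ) ^ 3)) ≠ 0 := by
    simp [hε0, h1 σ hσ, h2 σ hσ, h3 σ hσ]
  rw [mul_eq_zero, or_iff_right hfactor, sub_eq_zero]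
end
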